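/- Let (X, 𝒰, ∫) be a Daniell space. If f ∈ 𝒰*, then for every ε > 0 there exists a sequence of functions f_1, f_2, … ∈ 𝒰 such that f ≃ ∑ f_n and ∑_{n=1}^∞ ∫|f_n| ≤ ∫|f| + ε. -/

import Mathlib

open Filter Topology

/-- A Daniell space: a Riesz space `U` of real-valued functions on `X` together with a
positive linear functional `integral` satisfying the Daniell continuity condition (II). -/
structure DaniellSpace (X : Type*) where
  U : Set (X → ℝ)
  integral : (X → ℝ) → ℝ
  zero_mem : (0 : X → ℝ) ∈ U
  add_mem : ∀ {f g : X → ℝ}, f ∈ U → g ∈ U → f + g ∈ U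
  smul_mem : ∀ (c : ℝ) {f : X → ℝ}, f ∈ U → c • f ∈ U
  sup_mem : ∀ {f g : X → ℝ}, f ∈ U → g ∈ U → f ⊔ g ∈ U
  inf_mem : ∀ {f g : X → ℝ}, f ∈ U → g ∈ U → f ⊓ g ∈ U
  integral_add : ∀ {f g : X → ℝ}, f ∈ U → g ∈ U →
    integral (f + g) = integral f + integral g
  integral_smul : ∀ (c : ℝ) {f : X → ℝ}, f ∈ U → integral (c • f) = c * integral f
  integral_nonneg : ∀ {f : X → ℝ}, f ∈ U → (∀ x, 0 ≤ f x) → 0 ≤ integral f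
  integral_tendsto_zero : ∀ f : ℕ → X → ℝ, (∀ n, f n ∈ U) → Antitone f →
    (∀ x, Tendsto (fun n => f n x) atTop (𝓝 (0 : ℝ))) →
    Tendsto (fun n => integral (f n)) atTop (𝓝 (0 : ℝ))

/-- `f ≃ ∑ fₙ` : the `fₙ` belong to `U`, `∑ ∫|fₙ| < ∞`, and `f x = ∑ fₙ x` at every
point where the series converges absolutely. -/
def DaniellSpace.Rep {X : Type*} (D : DaniellSpace X) (f : X → ℝ) (fs : ℕ → X → ℝ) : Prop :=
  (∀ n, fs n ∈ D.U) ∧ (Summable fun n => D.integral |fs n|) ∧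
  ∀ x, (Summable fun n => |fs n x|) → HasSum (fun n => fs n x) (f x)

/-- The extension `𝒰*` of `𝒰`. -/
def DaniellSpace.Ustar {X : Type*} (D : DaniellSpace X) : Set (X → ℝ) :=
  {f | ∃ fs, D.Rep f fs}

-- The integral on `𝒰*`: `∫ f = ∑ ∫ fₙ` for any representation `f ≃ ∑ fₙ`
-- (the value is independent of the representation).
open Classical in
noncomputable def DaniellSpace.integralStar {X : Type*} (D : DaniellSpace X)
    (f : X → ℝ) : ℝ :=
  if h : ∃ fs, D.Rep f fs then ∑' n, D.integral (h.choose n) else 0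

/-- A Daniell space is complete if `f ≃ ∑ fₙ` with all `fₙ ∈ 𝒰` implies `f ∈ 𝒰`. -/
def DaniellSpace.Complete {X : Type*} (D : DaniellSpace X) : Prop :=
  ∀ (f : X → ℝ) (fs : ℕ → X → ℝ), D.Rep f fs → f ∈ D.U

/-- A null set: its characteristic function is a null function. -/
def DaniellSpace.NullSet {X : Type*} (D : DaniellSpace X) (S : Set X) : Prop :=
  S.indicator (fun _ => (1 : ℝ)) ∈ D.U ∧ D.integral (S.indicator fun _ => (1 : ℝ)) = 0

/-!
Let `f ≃ ∑ fₙ` with partial sums `Sₖ`. The increments `|Sₖ₊₁| - |Sₖ|` are dominated by `|fₖ|`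
and telescope to `|f|` wherever `∑ |fₙ|` converges, so (after interleaving with `fₙ, -fₙ`) they
represent `|f|`, and `∫|f| = lim ∫|S_N|`. Representing `f` instead by `S_N` followed by the tail
`f_N, f_{N+1}, …` costs `∫|S_N| + ∑_{n ≥ N} ∫|fₙ|`, which is within `ε` of `∫|f|` for large `N`.
Independence of `∫` from the representation comes from condition (II), through the countable
subadditivity `∫g ≤ ∑ ∫vₙ` for `g ≤ ∑ vₙ`, `vₙ ≥ 0`.
-/

open Finset

def interleave {α : Type*} (a b : ℕ → α) (n : ℕ) : α :=
  if Even n then a (n / 2) else b (n / 2)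

section Interleave

variable {α β : Type*} (a b : ℕ → α)

@[simp]
theorem interleave_two_mul (k : ℕ) : interleave a b (2 * k) = a k := by
  simp [interleave]

@[simp]
theorem interleave_two_mul_add_one (k : ℕ) : interleave a b (2 * k + 1) = b k := by
  simp [interleave, Nat.add_div_of_dvd_right]

theorem comp_interleave (g : α → β) :
    (fun n => g (interleave a b n)) = interleave (fun k => g (a k)) (fun k => g (b k)) := by
  funext n
  simp only [interleave, apply_ite g]

variable {a b}

theorem interleave_mem {s : Set α} (ha : ∀ n, a n ∈ s) (hb : ∀ n, b n ∈ s) (n : ℕ) :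
    interleave a b n ∈ s := by
  unfold interleave
  split_ifs
  exacts [ha _, hb _]

theorem HasSum.interleave [AddCommMonoid α] [TopologicalSpace α] [ContinuousAdd α] {s t : α}
    (ha : HasSum a s) (hb : HasSum b t) : HasSum (interleave a b) (s + t) :=
  HasSum.even_add_odd (by simpa using ha) (by simpa using hb)

theorem tsum_interleave [AddCommMonoid α] [TopologicalSpace α] [ContinuousAdd α] [T2Space α]
    (ha : Summable a) (hb : Summable b) : ∑' n, interleave a b n = ∑' n, a n + ∑' n, b n :=
  (ha.hasSum.interleave hb.hasSum).tsum_eq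

theorem summable_interleave_iff [AddCommGroup α] [UniformSpace α] [IsUniformAddGroup α]
    [CompleteSpace α] : Summable (interleave a b) ↔ Summable a ∧ Summable b := by
  refine ⟨fun h => ⟨?_, ?_⟩, fun ⟨ha, hb⟩ => (ha.hasSum.interleave hb.hasSum).summable⟩
  · have := h.comp_injective (i := fun k => 2 * k) fun m n hmn => by simpa using hmn
    exact this.congr fun k => by simp
  · have := h.comp_injective (i := fun k => 2 * k + 1) fun m n hmn => by simpa using hmn
    exact this.congr fun k => by simp

end Interleave

def absPartialSumDiff {α : Type*} [Lattice α] [AddCommGroup α] (a : ℕ → α) (k : ℕ) : α :=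
  |∑ n ∈ range (k + 1), a n| - |∑ n ∈ range k, a n|

theorem sum_range_absPartialSumDiff {α : Type*} [Lattice α] [AddCommGroup α] [AddLeftMono α]
    (a : ℕ → α) (K : ℕ) : ∑ k ∈ range K, absPartialSumDiff a k = |∑ n ∈ range K, a n| := by
  simp [absPartialSumDiff, sum_range_sub (fun k => |∑ n ∈ range k, a n|)]

theorem absPartialSumDiff_apply {X : Type*} (fs : ℕ → X → ℝ) (k : ℕ) (x : X) :
    absPartialSumDiff fs k x = absPartialSumDiff (fun n => fs n x) k := by
  simp [absPartialSumDiff, Finset.sum_apply]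

theorem abs_absPartialSumDiff_le (a : ℕ → ℝ) (k : ℕ) : |absPartialSumDiff a k| ≤ |a k| := by
  simpa [absPartialSumDiff, sum_range_succ] using
    abs_abs_sub_abs_le_abs_sub (∑ n ∈ range (k + 1), a n) (∑ n ∈ range k, a n)

theorem hasSum_absPartialSumDiff {a : ℕ → ℝ} (ha : Summable fun n => |a n|) :
    HasSum (absPartialSumDiff a) |∑' n, a n| := by
  have hsum : Summable (absPartialSumDiff a) :=
    ha.of_norm_bounded fun k => abs_absPartialSumDiff_le a k
  rw [hsum.hasSum_iff_tendsto_nat]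
  simpa only [sum_range_absPartialSumDiff] using ha.of_abs.hasSum.tendsto_sum_nat.abs

theorem tendsto_max_sub_sum_range_zero {a : ℕ → ℝ} {c : ℝ} (ha : ∀ n, 0 ≤ a n)
    (hc : Summable a → c ≤ ∑' n, a n) :
    Tendsto (fun k => max (c - ∑ n ∈ range k, a n) 0) atTop (𝓝 0) := by
  by_cases hsum : Summable a
  · have h := (tendsto_const_nhds (x := c)).sub hsum.hasSum.tendsto_sum_nat |>.max
      (tendsto_const_nhds (x := (0 : ℝ)))
    rwa [max_eq_right (sub_nonpos.2 (hc hsum))] at h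
  · have h := (not_summable_iff_tendsto_nat_atTop_of_nonneg ha).1 hsum
    refine tendsto_const_nhds.congr' ?_
    filter_upwards [h.eventually_ge_atTop c] with k hk
    exact (max_eq_right (by linarith)).symm

namespace DaniellSpace

variable {X : Type*} (D : DaniellSpace X)

theorem neg_mem {f : X → ℝ} (hf : f ∈ D.U) : -f ∈ D.U := by
  simpa using D.smul_mem (-1) hf

theorem sub_mem {f g : X → ℝ} (hf : f ∈ D.U) (hg : g ∈ D.U) : f - g ∈ D.U := by
  simpa [sub_eq_add_neg] using D.add_mem hf (D.neg_mem hg)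

theorem abs_mem {f : X → ℝ} (hf : f ∈ D.U) : |f| ∈ D.U :=
  D.sup_mem hf (D.neg_mem hf)

theorem sum_mem {fs : ℕ → X → ℝ} (hfs : ∀ n, fs n ∈ D.U) (k : ℕ) :
    ∑ n ∈ range k, fs n ∈ D.U :=
  AddSubmonoid.sum_mem ⟨⟨D.U, D.add_mem⟩, D.zero_mem⟩ fun n _ => hfs n

theorem absPartialSumDiff_mem {fs : ℕ → X → ℝ} (hfs : ∀ n, fs n ∈ D.U) (k : ℕ) :
    absPartialSumDiff fs k ∈ D.U :=
  D.sub_mem (D.abs_mem (D.sum_mem hfs _)) (D.abs_mem (D.sum_mem hfs _))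

theorem integral_zero : D.integral 0 = 0 := by
  simpa using D.integral_smul 0 D.zero_mem

theorem integral_neg {f : X → ℝ} (hf : f ∈ D.U) : D.integral (-f) = -D.integral f := by
  simpa using D.integral_smul (-1) hf

theorem integral_sum {fs : ℕ → X → ℝ} (hfs : ∀ n, fs n ∈ D.U) (k : ℕ) :
    D.integral (∑ n ∈ range k, fs n) = ∑ n ∈ range k, D.integral (fs n) := by
  induction k with
  | zero => simpa using D.integral_zero
  | succ k ih => rw [sum_range_succ, sum_range_succ, D.integral_add (D.sum_mem hfs k) (hfs k), ih]

theorem integral_mono {f g : X → ℝ} (hf : f ∈ D.U) (hg : g ∈ D.U) (hfg : f ≤ g) :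
    D.integral f ≤ D.integral g := by
  have h := D.integral_nonneg (D.sub_mem hg hf) fun x => sub_nonneg.2 (hfg x)
  rw [sub_eq_add_neg, D.integral_add hg (D.neg_mem hf), D.integral_neg hf] at h
  linarith

theorem integral_abs_nonneg {f : X → ℝ} (hf : f ∈ D.U) : 0 ≤ D.integral |f| :=
  D.integral_nonneg (D.abs_mem hf) fun x => abs_nonneg (f x)

theorem abs_integral_le {f : X → ℝ} (hf : f ∈ D.U) : |D.integral f| ≤ D.integral |f| := by
  have h := D.integral_mono (D.neg_mem hf) (D.abs_mem hf) (neg_le_abs f)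
  rw [D.integral_neg hf] at h
  exact abs_le.2 ⟨by linarith, D.integral_mono hf (D.abs_mem hf) (le_abs_self f)⟩

theorem integral_abs_add_le {f g : X → ℝ} (hf : f ∈ D.U) (hg : g ∈ D.U) :
    D.integral |f + g| ≤ D.integral |f| + D.integral |g| := by
  rw [← D.integral_add (D.abs_mem hf) (D.abs_mem hg)]
  exact D.integral_mono (D.abs_mem (D.add_mem hf hg)) (D.add_mem (D.abs_mem hf) (D.abs_mem hg))
    fun x => abs_add_le (f x) (g x)

theorem summable_integral {fs : ℕ → X → ℝ} (hfs : ∀ n, fs n ∈ D.U)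
    (habs : Summable fun n => D.integral |fs n|) : Summable fun n => D.integral (fs n) :=
  habs.of_norm_bounded fun n => D.abs_integral_le (hfs n)

theorem summable_integral_abs_absPartialSumDiff {fs : ℕ → X → ℝ} (hfs : ∀ n, fs n ∈ D.U)
    (habs : Summable fun n => D.integral |fs n|) :
    Summable fun k => D.integral |absPartialSumDiff fs k| :=
  habs.of_nonneg_of_le (fun k => D.integral_abs_nonneg (D.absPartialSumDiff_mem hfs k)) fun k =>
    D.integral_mono (D.abs_mem (D.absPartialSumDiff_mem hfs k)) (D.abs_mem (hfs k)) fun x => by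
      simpa [absPartialSumDiff_apply] using abs_absPartialSumDiff_le (fun n => fs n x) k

theorem tsum_integral_interleave {fs gs : ℕ → X → ℝ} (hfU : ∀ n, fs n ∈ D.U)
    (hgU : ∀ n, gs n ∈ D.U) (hf : Summable fun n => D.integral |fs n|)
    (hg : Summable fun n => D.integral |gs n|) :
    ∑' n, D.integral (interleave fs gs n) = ∑' n, D.integral (fs n) + ∑' n, D.integral (gs n) := by
  rw [comp_interleave fs gs D.integral]
  exact tsum_interleave (D.summable_integral hfU hf) (D.summable_integral hgU hg)

theorem integral_le_tsum {g : X → ℝ} {v : ℕ → X → ℝ} (hg : g ∈ D.U) (hv : ∀ n, v n ∈ D.U)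
    (hv0 : ∀ n x, 0 ≤ v n x) (hsum : Summable fun n => D.integral (v n))
    (hle : ∀ x, Summable (fun n => v n x) → g x ≤ ∑' n, v n x) :
    D.integral g ≤ ∑' n, D.integral (v n) := by
  set S : ℕ → X → ℝ := fun k => ∑ n ∈ range k, v n
  set w : ℕ → X → ℝ := fun k => (g - S k) ⊔ 0
  have hw : ∀ k, w k ∈ D.U := fun k => D.sup_mem (D.sub_mem hg (D.sum_mem hv k)) D.zero_mem
  have hw_apply : ∀ k x, w k x = max (g x - ∑ n ∈ range k, v n x) 0 := by
    simp [w, S, Finset.sum_apply]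
  have hw_anti : Antitone w := fun k l hkl x => by
    rw [hw_apply, hw_apply]
    refine max_le_max (sub_le_sub_left ?_ _) le_rfl
    exact sum_le_sum_of_subset_of_nonneg (range_subset_range.2 hkl) fun n _ _ => hv0 n x
  have hw_lim : Tendsto (fun k => D.integral (w k)) atTop (𝓝 0) :=
    D.integral_tendsto_zero w hw hw_anti fun x => by
      simpa only [hw_apply] using tendsto_max_sub_sum_range_zero (hv0 · x) (hle x)
  have hbound : ∀ k, D.integral g - ∑' n, D.integral (v n) ≤ D.integral (w k) := fun k => by
    have hg_le : g ≤ w k + S k := fun x => by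
      simp only [w, Pi.add_apply, Pi.sup_apply, Pi.sub_apply, Pi.zero_apply]
      linarith [le_max_left (g x - S k x) 0]
    have h := D.integral_mono hg (D.add_mem (hw k) (D.sum_mem hv k)) hg_le
    rw [D.integral_add (hw k) (D.sum_mem hv k), D.integral_sum hv] at h
    linarith [hsum.sum_le_tsum (range k) fun n _ => D.integral_nonneg (hv n) (hv0 n)]
  linarith [ge_of_tendsto' hw_lim hbound]

variable {D} {f g : X → ℝ} {fs gs : ℕ → X → ℝ}

theorem rep_interleave (hfU : ∀ n, fs n ∈ D.U) (hgU : ∀ n, gs n ∈ D.U)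
    (hf : Summable fun n => D.integral |fs n|) (hg : Summable fun n => D.integral |gs n|)
    (hsum : ∀ x, Summable (fun n => |fs n x|) → Summable (fun n => |gs n x|) →
      HasSum (fun n => fs n x + gs n x) (f x)) :
    D.Rep f (interleave fs gs) := by
  refine ⟨interleave_mem hfU hgU, ?_, fun x hx => ?_⟩
  · rw [comp_interleave fs gs fun u => D.integral |u|]
    exact summable_interleave_iff.2 ⟨hf, hg⟩
  · rw [comp_interleave fs gs fun u => |u x|] at hx
    obtain ⟨hfx, hgx⟩ := summable_interleave_iff.1 hx
    have hfgx := hfx.of_abs.hasSum.add hgx.of_abs.hasSum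
    rw [comp_interleave fs gs fun u => u x, ← hfgx.unique (hsum x hfx hgx)]
    exact hfx.of_abs.hasSum.interleave hgx.of_abs.hasSum

theorem Rep.add (hf : D.Rep f fs) (hg : D.Rep g gs) : D.Rep (f + g) (interleave fs gs) :=
  rep_interleave hf.1 hg.1 hf.2.1 hg.2.1 fun x hfx hgx => (hf.2.2 x hfx).add (hg.2.2 x hgx)

theorem Rep.neg (h : D.Rep f fs) : D.Rep (-f) (-fs) :=
  ⟨fun n => D.neg_mem (h.1 n), by simpa using h.2.1,
    fun x hx => by simpa using (h.2.2 x (by simpa using hx)).neg⟩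

theorem rep_single {u : X → ℝ} (hu : u ∈ D.U) : D.Rep u (Pi.single 0 u) := by
  refine ⟨fun n => ?_, ?_, fun x _ => ?_⟩
  · rcases eq_or_ne n 0 with rfl | hn
    · simpa using hu
    · simpa [hn] using D.zero_mem
  · exact (hasSum_single 0 fun n hn => by simp [hn, D.integral_zero]).summable
  · simpa using hasSum_single (f := fun n => (Pi.single 0 u : ℕ → X → ℝ) n x) 0 fun n hn => by
      simp [hn]

theorem Rep.nat_add (h : D.Rep f fs) (N : ℕ) :
    D.Rep (f - ∑ n ∈ range N, fs n) (fun k => fs (k + N)) := by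
  refine ⟨fun k => h.1 _, (summable_nat_add_iff N).2 h.2.1, fun x hx => ?_⟩
  simpa [Finset.sum_apply] using (hasSum_nat_add_iff' N).2 (h.2.2 x ((summable_nat_add_iff N).1 hx))

theorem Rep.tsum_integral_nonneg (h : D.Rep f fs) (hf : 0 ≤ f) : 0 ≤ ∑' n, D.integral (fs n) := by
  obtain ⟨hU, habs, hsum⟩ := h
  -- wherever `∑ₖ |f_{k+N}|` converges, `∑_{n<N} fₙ + ∑ₖ f_{k+N} = f ≥ 0`
  have hhead_le_tail : ∀ N, -∑ n ∈ range N, D.integral (fs n) ≤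
      ∑' k, D.integral |fs (k + N)| := fun N => by
    rw [← D.integral_sum hU, ← D.integral_neg (D.sum_mem hU N)]
    refine D.integral_le_tsum (D.neg_mem (D.sum_mem hU N)) (fun k => D.abs_mem (hU _))
      (fun k x => abs_nonneg _) ((summable_nat_add_iff N).2 habs) fun x hx => ?_
    have htail := (hasSum_nat_add_iff' N).2 (hsum x ((summable_nat_add_iff N).1 hx))
    have := hasSum_le (fun k => le_abs_self (fs (k + N) x)) htail hx.hasSum
    simp only [Pi.neg_apply, Finset.sum_apply, Pi.abs_apply] at this ⊢
    linarith [show 0 ≤ f x from hf x]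
  have hhead := (D.summable_integral hU habs).hasSum.tendsto_sum_nat.neg
  have := le_of_tendsto_of_tendsto' hhead (tendsto_sum_nat_add fun n => D.integral |fs n|)
    hhead_le_tail
  linarith

theorem Rep.tsum_integral_le (hf : D.Rep f fs) (hg : D.Rep f gs) :
    ∑' n, D.integral (gs n) ≤ ∑' n, D.integral (fs n) := by
  have h := (hf.add hg.neg).tsum_integral_nonneg (by simp)
  rw [tsum_integral_interleave D hf.1 hg.neg.1 hf.2.1 hg.neg.2.1] at h
  simp only [Pi.neg_apply, D.integral_neg (hg.1 _), tsum_neg] at h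
  linarith

theorem Rep.integralStar_eq (h : D.Rep f fs) : D.integralStar f = ∑' n, D.integral (fs n) := by
  have hex : ∃ gs, D.Rep f gs := ⟨fs, h⟩
  rw [integralStar, dif_pos hex]
  exact le_antisymm (h.tsum_integral_le hex.choose_spec) (hex.choose_spec.tsum_integral_le h)

/-- Interleaving with `fₙ, -fₙ` makes absolute convergence at a point force absolute
convergence of `∑ fₙ` there, where the increments of `|∑_{n<k} fₙ|` telescope to `|f|`. -/
theorem Rep.abs (h : D.Rep f fs) : D.Rep |f| (interleave (absPartialSumDiff fs + fs) (-fs)) := by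
  obtain ⟨hU, habs, hsum⟩ := h
  have hdU := D.absPartialSumDiff_mem hU
  refine rep_interleave (fun n => D.add_mem (hdU n) (hU n)) (fun n => D.neg_mem (hU n)) ?_
    (by simpa using habs) fun x _ hfx => ?_
  · refine ((D.summable_integral_abs_absPartialSumDiff hU habs).add habs).of_nonneg_of_le
      (fun k => D.integral_abs_nonneg (D.add_mem (hdU k) (hU k))) fun k => ?_
    exact D.integral_abs_add_le (hdU k) (hU k)
  · simp only [Pi.neg_apply, abs_neg] at hfx
    simpa [absPartialSumDiff_apply, (hsum x hfx).tsum_eq] using hasSum_absPartialSumDiff hfx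

theorem Rep.integralStar_abs (h : D.Rep f fs) :
    D.integralStar |f| = ∑' k, D.integral (absPartialSumDiff fs k) := by
  have hd := D.summable_integral (D.absPartialSumDiff_mem h.1)
    (D.summable_integral_abs_absPartialSumDiff h.1 h.2.1)
  have hI := D.summable_integral h.1 h.2.1
  have hadd : (fun k => D.integral ((absPartialSumDiff fs + fs) k)) =
      fun k => D.integral (absPartialSumDiff fs k) + D.integral (fs k) :=
    funext fun k => D.integral_add (D.absPartialSumDiff_mem h.1 k) (h.1 k)
  have hneg : (fun k => D.integral ((-fs) k)) = fun k => -D.integral (fs k) :=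
    funext fun k => D.integral_neg (h.1 k)
  rw [h.abs.integralStar_eq, comp_interleave _ _ D.integral, hadd, hneg,
    tsum_interleave (hd.add hI) hI.neg, hd.tsum_add hI, tsum_neg]
  ring

theorem Rep.tendsto_integral_abs_sum_range (h : D.Rep f fs) :
    Tendsto (fun K => D.integral |∑ n ∈ range K, fs n|) atTop (𝓝 (D.integralStar |f|)) := by
  rw [h.integralStar_abs]
  refine (D.summable_integral (D.absPartialSumDiff_mem h.1)
    (D.summable_integral_abs_absPartialSumDiff h.1 h.2.1)).hasSum.tendsto_sum_nat.congr fun K => ?_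
  rw [← D.integral_sum (D.absPartialSumDiff_mem h.1), sum_range_absPartialSumDiff]

end DaniellSpace

theorem daniell_Ustar_rep_almost_minimal_general {X : Type*} (D : DaniellSpace X)
    (f : X → ℝ) (hf : f ∈ D.Ustar) :
    ∀ ε > (0 : ℝ), ∃ fs : ℕ → X → ℝ, D.Rep f fs ∧
      ∑' n, D.integral |fs n| ≤ D.integralStar |f| + ε := by
  obtain ⟨fs, hfs⟩ := hf
  intro ε hε
  obtain ⟨N, hN_head, hN_tail⟩ :=
    ((hfs.tendsto_integral_abs_sum_range.eventually_lt_const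
        (lt_add_of_pos_right _ (half_pos hε))).and
      ((tendsto_sum_nat_add fun n => D.integral |fs n|).eventually_lt_const (half_pos hε))).exists
  have hS := D.sum_mem hfs.1 N
  have hrep := (D.rep_single hS).add (hfs.nat_add N)
  rw [add_sub_cancel] at hrep
  refine ⟨_, hrep, ?_⟩
  rw [comp_interleave _ _ fun u => D.integral |u|,
    tsum_interleave (D.rep_single hS).2.1 (hfs.nat_add N).2.1,
    tsum_eq_single 0 fun n hn => by simp [hn, D.integral_zero]]
  simp only [Pi.single_eq_same]
  linarith

/-- If `f ∈ 𝒰*`, then for every `ε > 0` there is a representation `f ≃ ∑ fₙ` with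
`∑ ∫|fₙ| ≤ ∫|f| + ε`. -/
theorem daniell_Ustar_rep_almost_minimal {X : Type*} [Nonempty X] (D : DaniellSpace X)
    (f : X → ℝ) (hf : f ∈ D.Ustar) :
    ∀ ε > (0 : ℝ), ∃ fs : ℕ → X → ℝ, D.Rep f fs ∧
      ∑' n, D.integral |fs n| ≤ D.integralStar |f| + ε :=
  daniell_Ustar_rep_almost_minimal_general D f hf
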